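/- arXiv:1905.04068 — 6 statements merged into one kernel-verified Lean document; each statement's English description precedes it below -/
import Mathlib

section
/- Let (X_n)_{n≥1} be a sequence of integrable real-valued random variables on a probability space that are identically distributed with common mean E[X], and suppose there exists an integer m ≥ 1 such that for every i with 1 ≤ i ≤ m the subsequence (X_{i+jm})_{j≥0} is a family of mutually independent random variables. Then (1/N) ∑_{n=1}^{N} X_n converges to E[X] almost surely as N → ∞. -/
/-! Split `1, …, N` into the `m` residue classes `i, i + m, i + 2m, …` (`1 ≤ i ≤ m`). Along each
class the variables are i.i.d., so by the strong law their running averages converge a.s. to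
`E[X]`; class `i` contributes `⌊(N + m - i) / m⌋ ≈ N / m` terms up to `N`, so the average of the
first `N` terms is asymptotically the mean of the `m` class averages. -/

open MeasureTheory ProbabilityTheory Filter Topology Finset

lemma lt_add_sub_div_iff_add_mul_le {m i N j : ℕ} (hm : 0 < m) (him : i ≤ m) :
    j < (N + (m - i)) / m ↔ i + j * m ≤ N := by
  rw [Nat.lt_iff_add_one_le, Nat.le_div_iff_mul_le hm]
  grind

theorem sum_Icc_eq_sum_progressions {M : Type*} [AddCommMonoid M] (g : ℕ → M) {m : ℕ}
    (hm : 0 < m) (N : ℕ) :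
    ∑ n ∈ Icc 1 N, g n = ∑ i ∈ Icc 1 m, ∑ j ∈ range ((N + (m - i)) / m), g (i + j * m) := by
  rw [sum_sigma']
  refine (sum_nbij' (fun p : (_ : ℕ) × ℕ => p.1 + p.2 * m)
    (fun n => ⟨(n - 1) % m + 1, (n - 1) / m⟩) ?_ ?_ ?_ ?_ fun _ _ => rfl).symm
  · rintro ⟨i, j⟩ hij
    simp only [mem_sigma, mem_Icc, mem_range] at hij ⊢
    have := (lt_add_sub_div_iff_add_mul_le hm hij.1.2).1 hij.2
    omega
  · intro n hn
    simp only [mem_Icc, mem_sigma, mem_range] at hn ⊢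
    have := Nat.mod_add_div' (n - 1) m
    have := Nat.mod_lt (n - 1) hm
    refine ⟨by omega, (lt_add_sub_div_iff_add_mul_le hm (by omega)).2 (by omega)⟩
  · rintro ⟨i, j⟩ hij
    simp only [mem_sigma, mem_Icc] at hij
    have h : i + j * m - 1 = (i - 1) + j * m := by omega
    rw [h, Nat.add_mul_mod_self_right, Nat.mod_eq_of_lt (by omega), Nat.add_mul_div_right _ _ hm,
      Nat.div_eq_of_lt (by omega), Nat.sub_add_cancel hij.1.1, zero_add]
  · intro n hn
    simp only [mem_Icc] at hn
    have := Nat.mod_add_div' (n - 1) m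
    simp only
    omega

lemma tendsto_natCast_add_div_div (k : ℕ) {m : ℕ} (hm : 0 < m) :
    Tendsto (fun N : ℕ => (((N + k) / m : ℕ) : ℝ) / N) atTop (𝓝 (1 / m)) := by
  have hm' : (0 : ℝ) < m := by exact_mod_cast hm
  rw [← tendsto_sub_nhds_zero_iff]
  refine squeeze_zero_norm' ?_ (tendsto_const_div_atTop_nhds_zero_nat ((k + m : ℕ) : ℝ))
  filter_upwards [eventually_gt_atTop 0] with N hN
  have hN' : (0 : ℝ) < N := by exact_mod_cast hN
  set c := (N + k) / m
  have hup : (m : ℝ) * c ≤ N + k := by exact_mod_cast Nat.mul_div_le (N + k) m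
  have hlow : (N : ℝ) + k < c * m + m := by exact_mod_cast Nat.lt_div_mul_add hm
  have hdiff : (c : ℝ) / N - 1 / m = (m * c - N) / (m * N) := by field_simp
  rw [Real.norm_eq_abs, hdiff, abs_div, abs_of_pos (by positivity : (0 : ℝ) < m * N),
    div_le_div_iff₀ (by positivity) hN', Nat.cast_add, ← mul_assoc]
  have hm1 : (1 : ℝ) ≤ m := by exact_mod_cast hm
  have hbound : |(m : ℝ) * c - N| ≤ (k + m) * m := abs_le.2 ⟨by nlinarith, by nlinarith⟩
  exact mul_le_mul_of_nonneg_right hbound hN'.le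

lemma tendsto_sum_range_comp_div {u : ℕ → ℝ} {a r : ℝ} {c : ℕ → ℕ}
    (hu : Tendsto (fun n : ℕ => (∑ j ∈ range n, u j) / n) atTop (𝓝 a))
    (hc : Tendsto c atTop atTop) (hcr : Tendsto (fun N : ℕ => (c N : ℝ) / N) atTop (𝓝 r)) :
    Tendsto (fun N : ℕ => (∑ j ∈ range (c N), u j) / N) atTop (𝓝 (a * r)) := by
  refine ((hu.comp hc).mul hcr).congr fun N => ?_
  by_cases hcN : c N = 0
  · simp [hcN]
  · exact div_mul_div_cancel₀ (Nat.cast_ne_zero.2 hcN : (c N : ℝ) ≠ 0)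

theorem tendsto_average_of_tendsto_average_progressions {x : ℕ → ℝ} {a : ℝ} {m : ℕ}
    (hm : 0 < m)
    (h : ∀ i ∈ Icc 1 m,
      Tendsto (fun n : ℕ => (∑ j ∈ range n, x (i + j * m)) / n) atTop (𝓝 a)) :
    Tendsto (fun N : ℕ => (1 / (N : ℝ)) * ∑ n ∈ Icc 1 N, x n) atTop (𝓝 a) := by
  have hprog : ∀ i ∈ Icc 1 m, Tendsto
      (fun N : ℕ => (∑ j ∈ range ((N + (m - i)) / m), x (i + j * m)) / N)
      atTop (𝓝 (a * (1 / m))) :=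
    fun i hi => tendsto_sum_range_comp_div (h i hi)
      (tendsto_atTop_mono (fun N => Nat.div_le_div_right (Nat.le_add_right N _))
        (Nat.tendsto_div_const_atTop hm.ne'))
      (tendsto_natCast_add_div_div _ hm)
  convert tendsto_finsetSum _ hprog using 2 with N
  · rw [sum_Icc_eq_sum_progressions _ hm, mul_sum]
    exact sum_congr rfl fun i _ => one_div_mul_eq_div _ _
  · simp only [sum_const, Nat.card_Icc, Nat.add_sub_cancel, nsmul_eq_mul]
    field_simp

theorem stmt1_general {Ω : Type*} [MeasurableSpace Ω] (μ : Measure Ω)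
    (X : ℕ → Ω → ℝ)
    (hint : ∀ n, 1 ≤ n → Integrable (X n) μ)
    (hident : ∀ n, 1 ≤ n → IdentDistrib (X n) (X 1) μ μ)
    (hindep : ∃ m : ℕ, 1 ≤ m ∧ ∀ i, 1 ≤ i → i ≤ m →
      iIndepFun
        (fun j : ℕ => X (i + j * m)) μ) :
    ∀ᵐ ω ∂μ, Tendsto (fun N : ℕ => (1 / (N : ℝ)) * ∑ n ∈ Finset.Icc 1 N, X n ω)
      atTop (nhds (∫ ω, X 1 ω ∂μ)) := by
  obtain ⟨m, hm, hindep⟩ := hindep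
  have hprog : ∀ i ∈ Icc 1 m, ∀ᵐ ω ∂μ, Tendsto
      (fun n : ℕ => (∑ j ∈ range n, X (i + j * m) ω) / n) atTop (𝓝 (∫ ω, X 1 ω ∂μ)) := by
    intro i hi
    obtain ⟨hi1, him⟩ := mem_Icc.1 hi
    have hident' : ∀ j, IdentDistrib (X (i + j * m)) (X 1) μ μ :=
      fun j => hident _ (hi1.trans (Nat.le_add_right _ _))
    simpa [(hident i hi1).integral_eq] using strong_law_ae_real _ (by simpa using hint i hi1)
      (fun j k hjk => (hindep i hi1 him).indepFun hjk)
      (fun j => (hident' j).trans (hident' 0).symm)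
  filter_upwards [(eventually_all_finset _).2 hprog] with ω hω
  exact tendsto_average_of_tendsto_average_progressions hm hω

/-- Lemma 2: strong law of large numbers for structurally i.i.d. (s.i.i.d.) sequences.
If `(X_n)_{n ≥ 1}` are identically distributed integrable random variables and there exists
`m ≥ 1` such that along every arithmetic progression with common difference `m` the variables
are mutually independent, then `(1/N) ∑_{n=1}^N X_n → E[X_1]` almost surely. -/
theorem stmt1 {Ω : Type*} [MeasurableSpace Ω] (μ : Measure Ω) [IsProbabilityMeasure μ]
    (X : ℕ → Ω → ℝ)
    (hint : ∀ n, 1 ≤ n → Integrable (X n) μ)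
    (hident : ∀ n, 1 ≤ n → IdentDistrib (X n) (X 1) μ μ)
    (hindep : ∃ m : ℕ, 1 ≤ m ∧ ∀ i, 1 ≤ i → i ≤ m →
      iIndepFun
        (fun j : ℕ => X (i + j * m)) μ) :
    ∀ᵐ ω ∂μ, Tendsto (fun N : ℕ => (1 / (N : ℝ)) * ∑ n ∈ Finset.Icc 1 N, X n ω)
      atTop (nhds (∫ ω, X 1 ω ∂μ)) :=
  stmt1_general μ X hint hident hindep
end

section
/- Let (S_k)_{k≥1} be strictly positive random variables and (g_k)_{k≥1} nonnegative integrable random variables on a common probability space. Assume each sequence is s.i.i.d.: the S_k are identically distributed with 0 < E[S_1] < ∞ and there is an integer m ≥ 1 such that along every arithmetic progression with common difference m the S_k are mutually independent; similarly the g_k are identically distributed and there is an integer m' ≥ 1 such that along every arithmetic progression with common difference m' the g_k are mutually independent. Define T_D(k) = S_1 + ⋯ + S_k and, for T > 0, M(T) = #{k ≥ 1 : T_D(k) ≤ T}. Then almost surely lim_{T→∞} (1/T) ∑_{k=1}^{M(T)} g_k = E[g_1] / E[S_1]. -/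
open MeasureTheory ProbabilityTheory Filter Topology

/-! Along each residue class modulo `m` the variables are i.i.d., so the strong law of large
numbers holds on each of the `m` subsequences; interleaving them, it holds for the whole
s.i.i.d. sequence. This gives `T_D(n) / n → E[S_1]` and `(g_1 + ⋯ + g_n) / n → E[g_1]` almost
surely. The rest is deterministic: `T_D(M(T)) ≤ T < T_D(M(T) + 1)` squeezes `T / M(T)` to
`E[S_1]`, and then `(g_1 + ⋯ + g_{M(T)}) / T` tends to `E[g_1] / E[S_1]`. -/

theorem Finset.sum_Icc_one_eq_sum_Icc_sum_range_add_mul {M : Type*} [AddCommMonoid M]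
    (f : ℕ → M) {m : ℕ} (hm : 1 ≤ m) (n : ℕ) :
    ∑ k ∈ Icc 1 n, f k = ∑ i ∈ Icc 1 m, ∑ j ∈ range ((n + (m - i)) / m), f (i + j * m) := by
  have mem_range_iff : ∀ i j : ℕ, 1 ≤ i → i ≤ m →
      (j < (n + (m - i)) / m ↔ i + j * m ≤ n) := by
    intro i j hi1 hi2
    rw [Nat.lt_iff_add_one_le, Nat.le_div_iff_mul_le (by omega), add_one_mul]
    omega
  rw [sum_sigma']
  symm
  refine sum_nbij' (fun p => p.1 + p.2 * m) (fun k => ⟨(k - 1) % m + 1, (k - 1) / m⟩)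
    ?_ ?_ ?_ ?_ fun _ _ => rfl
  · rintro ⟨i, j⟩ hij
    simp only [mem_sigma, mem_Icc, mem_range] at hij ⊢
    have := (mem_range_iff i j hij.1.1 hij.1.2).1 hij.2
    omega
  · intro k hk
    simp only [mem_sigma, mem_Icc, mem_range] at hk ⊢
    have hmod : (k - 1) % m < m := Nat.mod_lt _ (by omega)
    have hdiv : (k - 1) % m + (k - 1) / m * m = k - 1 := Nat.mod_add_div' _ _
    exact ⟨⟨by omega, by omega⟩, (mem_range_iff _ _ (by omega) (by omega)).2 (by omega)⟩
  · rintro ⟨i, j⟩ hij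
    simp only [mem_sigma, mem_Icc] at hij
    have hk : i + j * m - 1 = (i - 1) + j * m := by omega
    have hmod : ((i - 1) + j * m) % m = i - 1 := by
      rw [Nat.add_mul_mod_self_right, Nat.mod_eq_of_lt (by omega)]
    have hdiv : ((i - 1) + j * m) / m = j := by
      rw [Nat.add_mul_div_right _ _ (by omega), Nat.div_eq_of_lt (by omega), zero_add]
    simp only [hk, hmod, hdiv, Sigma.mk.injEq, heq_eq_eq, and_true]
    omega
  · intro k hk
    simp only [mem_Icc] at hk
    have hdiv : (k - 1) % m + (k - 1) / m * m = k - 1 := Nat.mod_add_div' _ _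
    change (k - 1) % m + 1 + (k - 1) / m * m = k
    omega

theorem tendsto_natCast_add_div_div_self {m : ℕ} (hm : 1 ≤ m) (a : ℕ) :
    Tendsto (fun n : ℕ => (((n + a) / m : ℕ) : ℝ) / n) atTop (𝓝 (1 / m)) := by
  have lower : Tendsto (fun n : ℕ => 1 / (m : ℝ) - 1 / n) atTop (𝓝 (1 / m)) := by
    simpa using tendsto_const_nhds.sub (tendsto_const_div_atTop_nhds_zero_nat (1 : ℝ))
  have upper : Tendsto (fun n : ℕ => 1 / (m : ℝ) + (a / m) / n) atTop (𝓝 (1 / m)) := by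
    simpa using tendsto_const_nhds.add (tendsto_const_div_atTop_nhds_zero_nat ((a : ℝ) / m))
  refine tendsto_of_tendsto_of_tendsto_of_le_of_le' lower upper ?_ ?_
  all_goals filter_upwards [eventually_gt_atTop 0] with n hn
  all_goals have hn' : (0 : ℝ) < n := by exact_mod_cast hn
  · have hlt : ((n + a : ℕ) : ℝ) < (((n + a) / m : ℕ) : ℝ) * m + m := by
      exact_mod_cast Nat.lt_div_mul_add (a := n + a) hm
    rw [le_div_iff₀ hn']
    field_simp
    push_cast at hlt
    nlinarith
  · have hle : (((n + a) / m : ℕ) : ℝ) ≤ ((n + a : ℕ) : ℝ) / m := Nat.cast_div_le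
    rw [div_le_iff₀ hn']
    calc (((n + a) / m : ℕ) : ℝ) ≤ ((n + a : ℕ) : ℝ) / m := hle
      _ = (1 / m + a / m / n) * n := by push_cast; field_simp

theorem Filter.Tendsto.comp_div_of_tendsto_div {α : Type*} {l : Filter α} {u : ℕ → ℝ}
    {φ : α → ℕ} {x : α → ℝ} {c r : ℝ} (hu : Tendsto (fun n : ℕ => u n / n) atTop (𝓝 c))
    (hφ : Tendsto φ l atTop) (hφx : Tendsto (fun a => (φ a : ℝ) / x a) l (𝓝 r)) :
    Tendsto (fun a => u (φ a) / x a) l (𝓝 (c * r)) := by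
  refine ((hu.comp hφ).mul hφx).congr' ?_
  filter_upwards [hφ.eventually_gt_atTop 0] with a ha
  exact div_mul_div_cancel₀ (by exact_mod_cast ha.ne')

theorem strong_law_ae_real_of_iIndepFun_add_mul {Ω : Type*} [MeasurableSpace Ω] {μ : Measure Ω}
    (X : ℕ → Ω → ℝ) (hint : Integrable (X 1) μ)
    (hident : ∀ k, 1 ≤ k → IdentDistrib (X k) (X 1) μ μ) {m : ℕ} (hm : 1 ≤ m)
    (hindep : ∀ i, 1 ≤ i → i ≤ m → iIndepFun (fun j : ℕ => X (i + j * m)) μ) :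
    ∀ᵐ ω ∂μ, Tendsto (fun n : ℕ => (∑ k ∈ Finset.Icc 1 n, X k ω) / n) atTop
      (𝓝 (∫ ω, X 1 ω ∂μ)) := by
  have residue_class : ∀ i, 1 ≤ i → i ≤ m → ∀ᵐ ω ∂μ, Tendsto
      (fun J : ℕ => (∑ j ∈ Finset.range J, X (i + j * m) ω) / J) atTop
        (𝓝 (∫ ω, X 1 ω ∂μ)) := by
    intro i hi1 hi2
    have hident_i : ∀ j, IdentDistrib (X (i + j * m)) (X (i + 0 * m)) μ μ := fun j =>
      (hident _ (by omega)).trans (hident _ (by omega)).symm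
    have hint_i : Integrable (X (i + 0 * m)) μ := (hident _ (by omega)).integrable_iff.mpr hint
    have := strong_law_ae_real (fun j => X (i + j * m)) hint_i
      (fun j j' hjj' => (hindep i hi1 hi2).indepFun hjj') hident_i
    simpa [(hident i hi1).integral_eq] using this
  have all_classes : ∀ᵐ ω ∂μ, ∀ i, 1 ≤ i → i ≤ m → Tendsto
      (fun J : ℕ => (∑ j ∈ Finset.range J, X (i + j * m) ω) / J) atTop
        (𝓝 (∫ ω, X 1 ω ∂μ)) := by
    refine ae_all_iff.2 fun i => ?_
    by_cases hi : 1 ≤ i ∧ i ≤ m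
    · filter_upwards [residue_class i hi.1 hi.2] with ω hω _ _ using hω
    · exact ae_of_all _ fun ω hi1 hi2 => absurd ⟨hi1, hi2⟩ hi
  filter_upwards [all_classes] with ω hω
  have hm' : (m : ℝ) ≠ 0 := by positivity
  have hsum : ∑ _i ∈ Finset.Icc 1 m, (∫ ω, X 1 ω ∂μ) * (1 / m) = ∫ ω, X 1 ω ∂μ := by
    rw [Finset.sum_const, Nat.card_Icc, Nat.add_sub_cancel, nsmul_eq_mul]
    field_simp
  have decomp : (fun n : ℕ => (∑ k ∈ Finset.Icc 1 n, X k ω) / n) = fun n : ℕ =>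
      ∑ i ∈ Finset.Icc 1 m, (∑ j ∈ Finset.range ((n + (m - i)) / m), X (i + j * m) ω) / n :=
    funext fun n => by rw [Finset.sum_Icc_one_eq_sum_Icc_sum_range_add_mul _ hm, Finset.sum_div]
  rw [decomp, ← hsum]
  refine tendsto_finsetSum _ fun i hi => ?_
  rw [Finset.mem_Icc] at hi
  exact (hω i hi.1 hi.2).comp_div_of_tendsto_div
    ((Nat.tendsto_div_const_atTop (by omega)).comp (tendsto_add_atTop_nat (m - i)))
    (tendsto_natCast_add_div_div_self hm (m - i))

/-- `M(T)` of the paper, for the renewal epochs `t n = T_D(n)`. -/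
noncomputable def renewalCount (t : ℕ → ℝ) (T : ℝ) : ℕ :=
  {n : ℕ | 1 ≤ n ∧ t n ≤ T}.ncard

theorem tendsto_atTop_of_tendsto_div_natCast {t : ℕ → ℝ} {a : ℝ} (ha : 0 < a)
    (ht : Tendsto (fun n : ℕ => t n / n) atTop (𝓝 a)) : Tendsto t atTop atTop := by
  refine (ht.pos_mul_atTop ha tendsto_natCast_atTop_atTop).congr' ?_
  filter_upwards [eventually_gt_atTop 0] with n hn
  exact div_mul_cancel₀ _ (by exact_mod_cast hn.ne')

section renewal

variable {t : ℕ → ℝ} (hmono : Monotone t)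
include hmono

theorem le_renewalCount_iff (htop : Tendsto t atTop atTop) {T : ℝ} {N : ℕ} (hN : 1 ≤ N) :
    N ≤ renewalCount t T ↔ t N ≤ T := by
  have subset_Icc : ∀ K, T < t (K + 1) → {n : ℕ | 1 ≤ n ∧ t n ≤ T} ⊆ Set.Icc 1 K :=
    fun K hK n hn => ⟨hn.1, not_lt.1 fun hKn => (hK.trans_le (hmono hKn)).not_ge hn.2⟩
  constructor
  · intro hNM
    by_contra! hTN
    have := Set.ncard_le_ncard (subset_Icc (N - 1) (by rwa [Nat.sub_add_cancel hN]))
    simp only [Set.ncard_Icc_nat] at this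
    exact absurd (hNM.trans this) (by omega)
  · intro hNT
    obtain ⟨K, hK⟩ := ((tendsto_add_atTop_nat 1).eventually (htop.eventually_gt_atTop T)).exists
    have hIcc : Set.Icc 1 N ⊆ {n : ℕ | 1 ≤ n ∧ t n ≤ T} :=
      fun n hn => ⟨hn.1, (hmono hn.2).trans hNT⟩
    have := Set.ncard_le_ncard hIcc ((Set.finite_Icc 1 K).subset (subset_Icc K hK))
    simpa [renewalCount] using this

theorem tendsto_renewalCount_atTop (htop : Tendsto t atTop atTop) :
    Tendsto (renewalCount t) atTop atTop := by
  refine tendsto_atTop.2 fun N => ?_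
  filter_upwards [eventually_ge_atTop (t (N + 1))] with T hT
  exact (Nat.le_succ N).trans ((le_renewalCount_iff hmono htop (Nat.le_add_left 1 N)).2 hT)

variable {a : ℝ} (ha : 0 < a) (ht : Tendsto (fun n : ℕ => t n / n) atTop (𝓝 a))
include ha ht

theorem tendsto_renewalCount_div :
    Tendsto (fun T => (renewalCount t T : ℝ) / T) atTop (𝓝 a⁻¹) := by
  have htop := tendsto_atTop_of_tendsto_div_natCast ha ht
  have hM := tendsto_renewalCount_atTop hmono htop
  have ht_succ : Tendsto (fun n : ℕ => t (n + 1) / n) atTop (𝓝 a) := by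
    have h_succ_div : Tendsto (fun n : ℕ => ((n + 1 : ℕ) : ℝ) / n) atTop (𝓝 1) := by
      simpa using tendsto_natCast_add_div_div_self le_rfl 1
    simpa using ht.comp_div_of_tendsto_div (tendsto_add_atTop_nat 1) h_succ_div
  have hTM : Tendsto (fun T => T / renewalCount t T) atTop (𝓝 a) := by
    refine tendsto_of_tendsto_of_tendsto_of_le_of_le' (ht.comp hM) (ht_succ.comp hM) ?_ ?_
    all_goals filter_upwards [hM.eventually_ge_atTop 1] with T hT
    all_goals have hM_pos : (0 : ℝ) ≤ renewalCount t T := Nat.cast_nonneg _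
    · exact div_le_div_of_nonneg_right ((le_renewalCount_iff hmono htop hT).1 le_rfl) hM_pos
    · have hT_lt : T < t (renewalCount t T + 1) := not_le.1 fun h =>
        ((le_renewalCount_iff hmono htop (by omega)).2 h).not_gt (Nat.lt_succ_self _)
      exact div_le_div_of_nonneg_right hT_lt.le hM_pos
  simpa using hTM.inv₀ ha.ne'

theorem tendsto_renewal_reward {G : ℕ → ℝ} {b : ℝ}
    (hG : Tendsto (fun n : ℕ => G n / n) atTop (𝓝 b)) :
    Tendsto (fun T => 1 / T * G (renewalCount t T)) atTop (𝓝 (b / a)) := by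
  have := hG.comp_div_of_tendsto_div
    (tendsto_renewalCount_atTop hmono (tendsto_atTop_of_tendsto_div_natCast ha ht))
    (tendsto_renewalCount_div hmono ha ht)
  rw [← div_eq_mul_inv] at this
  exact this.congr fun T => (one_div_mul_eq_div _ _).symm

end renewal

theorem stmt2_general {Ω : Type*} [MeasurableSpace Ω] (μ : Measure Ω)
    (S g : ℕ → Ω → ℝ)
    (hSpos : ∀ k, 1 ≤ k → ∀ ω, 0 < S k ω)
    (hSint : Integrable (S 1) μ)
    (hSmean : 0 < ∫ ω, S 1 ω ∂μ)
    (hgint : ∀ k, 1 ≤ k → Integrable (g k) μ)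
    (hSident : ∀ k, 1 ≤ k → IdentDistrib (S k) (S 1) μ μ)
    (hgident : ∀ k, 1 ≤ k → IdentDistrib (g k) (g 1) μ μ)
    (hSindep : ∃ m : ℕ, 1 ≤ m ∧ ∀ i, 1 ≤ i → i ≤ m →
      iIndepFun
        (fun j : ℕ => S (i + j * m)) μ)
    (hgindep : ∃ m' : ℕ, 1 ≤ m' ∧ ∀ i, 1 ≤ i → i ≤ m' →
      iIndepFun
        (fun j : ℕ => g (i + j * m')) μ) :
    ∀ᵐ ω ∂μ, Tendsto (fun T : ℝ =>
        (1 / T) * ∑ k ∈ Finset.Icc 1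
          (Set.ncard {n : ℕ | 1 ≤ n ∧ (∑ j ∈ Finset.Icc 1 n, S j ω) ≤ T}), g k ω)
      atTop (nhds ((∫ ω, g 1 ω ∂μ) / (∫ ω, S 1 ω ∂μ))) := by
  obtain ⟨m, hm, hSindep⟩ := hSindep
  obtain ⟨m', hm', hgindep⟩ := hgindep
  filter_upwards [strong_law_ae_real_of_iIndepFun_add_mul S hSint hSident hm hSindep,
    strong_law_ae_real_of_iIndepFun_add_mul g (hgint 1 le_rfl) hgident hm' hgindep]
    with ω hSω hgω
  have hmono : Monotone fun n => ∑ j ∈ Finset.Icc 1 n, S j ω := monotone_nat_of_le_succ fun n => by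
    rw [Finset.sum_Icc_succ_top (by omega)]
    exact le_add_of_nonneg_right (hSpos _ (by omega) ω).le
  exact tendsto_renewal_reward hmono hSmean hSω hgω

/-- Theorem 2: renewal-reward theorem for s.i.i.d. inter-renewal times `S_k` and s.i.i.d.
rewards `g_k`. With `T_D(k) = S_1 + ⋯ + S_k` and `M(T) = #{k ≥ 1 : T_D(k) ≤ T}`, almost surely
`(1/T) ∑_{k=1}^{M(T)} g_k → E[g_1] / E[S_1]` as `T → ∞`. -/
theorem stmt2 {Ω : Type*} [MeasurableSpace Ω] (μ : Measure Ω) [IsProbabilityMeasure μ]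
    (S g : ℕ → Ω → ℝ)
    (hSpos : ∀ k, 1 ≤ k → ∀ ω, 0 < S k ω)
    (hgnonneg : ∀ k, 1 ≤ k → ∀ ω, 0 ≤ g k ω)
    (hSint : Integrable (S 1) μ)
    (hSmean : 0 < ∫ ω, S 1 ω ∂μ)
    (hgint : ∀ k, 1 ≤ k → Integrable (g k) μ)
    (hSident : ∀ k, 1 ≤ k → IdentDistrib (S k) (S 1) μ μ)
    (hgident : ∀ k, 1 ≤ k → IdentDistrib (g k) (g 1) μ μ)
    (hSindep : ∃ m : ℕ, 1 ≤ m ∧ ∀ i, 1 ≤ i → i ≤ m →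
      iIndepFun
        (fun j : ℕ => S (i + j * m)) μ)
    (hgindep : ∃ m' : ℕ, 1 ≤ m' ∧ ∀ i, 1 ≤ i → i ≤ m' →
      iIndepFun
        (fun j : ℕ => g (i + j * m')) μ) :
    ∀ᵐ ω ∂μ, Tendsto (fun T : ℝ =>
        (1 / T) * ∑ k ∈ Finset.Icc 1
          (Set.ncard {n : ℕ | 1 ≤ n ∧ (∑ j ∈ Finset.Icc 1 n, S j ω) ≤ T}), g k ω)
      atTop (nhds ((∫ ω, g 1 ω ∂μ) / (∫ ω, S 1 ω ∂μ))) :=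
  stmt2_general μ S g hSpos hSint hSmean hgint hSident hgident hSindep hgindep
end

section
/- Let λ > 0, μ > 0, and d ≥ 1/λ. Then ∫_0^∞ ∫_0^∞ min{ (x + ⌈λx'⌉/λ − d)^+ , x + ⌈λx'⌉/λ − x' } · μ e^{−μx} · μ e^{−μx'} dx dx' = e^{−μ⌈λd⌉/λ} / (λ(1 − e^{−μ/λ})) + e^{−μ⌊λd⌋/λ} (⌈λd⌉/λ − d + 1/μ) + (e^{−μd}/μ) ((e^{μ/λ} − 1)⌊λd⌋ − 1). -/
/-!
Integrating out `X_k` first: with `w = ⌈λx'⌉/λ - max d x'` the inner integrand is `(x + w)⁺`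
(because `⌈λx'⌉/λ ≥ x'`), whose mean under the exponential law is `w⁺ + e^{μ min w 0}/μ`.
The outer integral is split at `⌊λd⌋/λ ≤ d ≤ ⌈λd⌉/λ`. The idle time `⌈λx⌉/λ - x` is
`1/λ`-periodic, so on `(0, ⌊λd⌋/λ]` the integrand is `e^{-μd}` times a periodic function and
contributes `⌊λd⌋` equal periods. Beyond `⌈λd⌉/λ`, memorylessness of the exponential law and
periodicity give the self-similarity `K = 1/λ + e^{-μ/λ} K` for `K = 𝔼[I_k] + 1/μ`. On the two
short middle pieces `⌈λx'⌉ = ⌈λd⌉` is constant.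
-/

open MeasureTheory Real Set Filter Function Topology

section ExponentialDensity

variable {mu : ℝ}

theorem hasDerivAt_exp_neg_mul (x : ℝ) :
    HasDerivAt (fun x => exp (-(mu * x))) (-mu * exp (-(mu * x))) x :=
  ((hasDerivAt_id' x).const_mul mu).fun_neg.exp.congr_deriv (by ring)

theorem hasDerivAt_add_mul_exp_neg_mul (hmu : mu ≠ 0) (w x : ℝ) :
    HasDerivAt (fun x => (x + w) * exp (-(mu * x)))
      (-(x + w - 1 / mu) * (mu * exp (-(mu * x)))) x :=
  (((hasDerivAt_id' x).add_const w).fun_mul (hasDerivAt_exp_neg_mul x)).congr_deriv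
    (by field_simp; ring)

theorem tendsto_add_mul_exp_neg_mul_atTop (hmu : 0 < mu) (w : ℝ) :
    Tendsto (fun x => (x + w) * exp (-(mu * x))) atTop (𝓝 0) := by
  have hx := tendsto_rpow_mul_exp_neg_mul_atTop_nhds_zero 1 mu hmu
  have he : Tendsto (fun x => exp (-(mu * x))) atTop (𝓝 0) :=
    tendsto_exp_atBot.comp (tendsto_neg_atTop_atBot.comp (tendsto_id.const_mul_atTop hmu))
  simpa [add_mul, neg_mul] using hx.add (he.const_mul w)

theorem integrableOn_Ioi_exp_density (hmu : 0 < mu) (a : ℝ) :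
    IntegrableOn (fun x => mu * exp (-(mu * x))) (Ioi a) := by
  have := (exp_neg_integrableOn_Ioi a hmu).const_mul mu
  simp only [neg_mul] at this ⊢
  exact this

theorem integral_exp_density (a b : ℝ) :
    ∫ x in a..b, mu * exp (-(mu * x)) = exp (-(mu * a)) - exp (-(mu * b)) := by
  have h x : HasDerivAt (fun x => -exp (-(mu * x))) (mu * exp (-(mu * x))) x :=
    (hasDerivAt_exp_neg_mul x).neg.congr_deriv (by ring)
  rw [intervalIntegral.integral_eq_sub_of_hasDerivAt (fun x _ => h x)
    (Continuous.intervalIntegrable (by fun_prop) _ _)]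
  ring

theorem integral_Ioi_add_mul_exp_density (hmu : 0 < mu) {a w : ℝ} (h : 0 ≤ a + w) :
    ∫ x in Ioi a, (x + w) * (mu * exp (-(mu * x))) = (a + w + 1 / mu) * exp (-(mu * a)) := by
  have hderiv x : HasDerivAt (fun x => -((x + (w + 1 / mu)) * exp (-(mu * x))))
      ((x + w) * (mu * exp (-(mu * x)))) x :=
    (hasDerivAt_add_mul_exp_neg_mul hmu.ne' (w + 1 / mu) x).neg.congr_deriv (by ring)
  rw [integral_Ioi_of_hasDerivAt_of_nonneg (Continuous.continuousWithinAt (by fun_prop))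
    (fun x _ => hderiv x) (fun x hx => ?_) (tendsto_add_mul_exp_neg_mul_atTop hmu _).neg]
  · ring
  · have : 0 ≤ x + w := by linarith [mem_Ioi.mp hx]
    positivity

theorem integral_sub_add_mul_exp_density (hmu : mu ≠ 0) (a b : ℝ) :
    ∫ x in a..b, (b - x + 1 / mu) * (mu * exp (-(mu * x))) = (b - a) * exp (-(mu * a)) := by
  have h x : HasDerivAt (fun x => (x + -b) * exp (-(mu * x)))
      ((b - x + 1 / mu) * (mu * exp (-(mu * x)))) x :=
    (hasDerivAt_add_mul_exp_neg_mul hmu (-b) x).congr_deriv (by ring)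
  rw [intervalIntegral.integral_eq_sub_of_hasDerivAt (fun x _ => h x)
    (Continuous.intervalIntegrable (by fun_prop) _ _)]
  ring

/-- Memorylessness of the exponential distribution. -/
theorem integral_Ioi_mul_exp_density_eq (g : ℝ → ℝ) (a : ℝ) :
    ∫ x in Ioi a, g x * (mu * exp (-(mu * x))) =
      exp (-(mu * a)) * ∫ x in Ioi 0, g (x + a) * (mu * exp (-(mu * x))) := by
  rw [← integral_const_mul,
    ← (measurePreserving_add_right volume a).setIntegral_preimage_emb
      (measurableEmbedding_addRight a), preimage_add_const_Ioi, sub_self]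
  refine setIntegral_congr_fun measurableSet_Ioi fun x _ => ?_
  simp only [mul_add, neg_add, exp_add]
  ring

theorem Function.Periodic.integral_Ioi_mul_exp_density (hmu : 0 < mu) {φ : ℝ → ℝ} {T : ℝ}
    (hφ : Periodic φ T) (hT : 0 < T)
    (hint : IntegrableOn (fun x => φ x * (mu * exp (-(mu * x)))) (Ioi 0)) :
    ∫ x in Ioi 0, φ x * (mu * exp (-(mu * x))) =
      (∫ x in 0..T, φ x * (mu * exp (-(mu * x)))) / (1 - exp (-(mu * T))) := by
  have hq : exp (-(mu * T)) < 1 := exp_lt_one_iff.mpr (by nlinarith)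
  have hsplit :=
    intervalIntegral.integral_interval_add_Ioi hint (hint.mono_set (Ioi_subset_Ioi hT.le))
  simp only [integral_Ioi_mul_exp_density_eq φ T, show ∀ x, φ (x + T) = φ x from hφ] at hsplit
  rw [eq_div_iff (by linarith)]
  linear_combination -hsplit

end ExponentialDensity

section MeanPosPart

variable {mu : ℝ}

noncomputable def meanPosPartAdd (mu w : ℝ) : ℝ := max w 0 + exp (mu * min w 0) / mu

theorem meanPosPartAdd_of_nonneg {w : ℝ} (hw : 0 ≤ w) : meanPosPartAdd mu w = w + 1 / mu := by
  simp [meanPosPartAdd, hw]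

theorem meanPosPartAdd_of_nonpos {w : ℝ} (hw : w ≤ 0) :
    meanPosPartAdd mu w = exp (mu * w) / mu := by
  simp [meanPosPartAdd, hw]

theorem meanPosPartAdd_nonneg (hmu : 0 < mu) (w : ℝ) : 0 ≤ meanPosPartAdd mu w := by
  unfold meanPosPartAdd
  positivity

theorem meanPosPartAdd_le (hmu : 0 < mu) (w : ℝ) : meanPosPartAdd mu w ≤ max w 0 + 1 / mu := by
  have : exp (mu * min w 0) ≤ 1 :=
    exp_le_one_iff.mpr (mul_nonpos_of_nonneg_of_nonpos hmu.le (min_le_right _ _))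
  unfold meanPosPartAdd
  gcongr

theorem integral_Ioi_max_add_mul_exp_density (hmu : 0 < mu) (w : ℝ) :
    ∫ x in Ioi 0, max (x + w) 0 * (mu * exp (-(mu * x))) = meanPosPartAdd mu w := by
  have hIoi a (ha : 0 ≤ a + w) : ∫ x in Ioi a, max (x + w) 0 * (mu * exp (-(mu * x))) =
      (a + w + 1 / mu) * exp (-(mu * a)) := by
    rw [← integral_Ioi_add_mul_exp_density hmu ha]
    refine setIntegral_congr_fun measurableSet_Ioi fun x hx => ?_
    rw [max_eq_left (by linarith [mem_Ioi.mp hx])]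
  rcases le_total 0 w with hw | hw
  · simpa [meanPosPartAdd_of_nonneg hw] using hIoi 0 (by simpa using hw)
  · rw [meanPosPartAdd_of_nonpos hw, setIntegral_eq_of_subset_of_forall_sdiff_eq_zero
      measurableSet_Ioi (Ioi_subset_Ioi (neg_nonneg.mpr hw)) fun x hx => ?_, hIoi (-w) (by simp)]
    · simp [div_eq_inv_mul]
    · rw [max_eq_right (by linarith [not_lt.mp (mem_Ioi.not.mp hx.2)]), zero_mul]

end MeanPosPart

section IdleTime

variable {lam mu : ℝ}

noncomputable def idleTime (lam x : ℝ) : ℝ := ⌈lam * x⌉ / lam - x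

theorem periodic_idleTime (hlam : lam ≠ 0) : Periodic (idleTime lam) lam⁻¹ := by
  intro x
  simp only [idleTime, mul_add, mul_inv_cancel₀ hlam, Int.ceil_add_one, Int.cast_add,
    Int.cast_one]
  field_simp
  ring

theorem measurable_idleTime : Measurable (idleTime lam) := by
  unfold idleTime
  fun_prop

theorem idleTime_nonneg (hlam : 0 < lam) (x : ℝ) : 0 ≤ idleTime lam x := by
  rw [idleTime, sub_nonneg, le_div_iff₀ hlam, mul_comm]
  exact Int.le_ceil _

theorem idleTime_lt (hlam : 0 < lam) (x : ℝ) : idleTime lam x < lam⁻¹ := by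
  rw [idleTime, sub_lt_iff_lt_add, ← one_div, div_add' _ _ _ hlam.ne',
    div_lt_div_iff_of_pos_right hlam]
  linarith [Int.ceil_lt_add_one (lam * x)]

theorem ceil_mul_eq_of_mem_Ioc (hlam : 0 < lam) {k : ℤ} {x : ℝ}
    (hx : x ∈ Ioc ((k - 1) / lam) (k / lam)) : ⌈lam * x⌉ = k := by
  rw [mem_Ioc, div_lt_iff₀ hlam, le_div_iff₀ hlam] at hx
  exact Int.ceil_eq_iff.mpr ⟨by linarith, by linarith⟩

theorem floor_mul_div_le (hlam : 0 < lam) (d : ℝ) : (⌊lam * d⌋ : ℝ) / lam ≤ d := by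
  rw [div_le_iff₀ hlam, mul_comm]
  exact Int.floor_le _

theorem le_ceil_mul_div (hlam : 0 < lam) (d : ℝ) : d ≤ (⌈lam * d⌉ : ℝ) / lam := by
  rw [le_div_iff₀ hlam, mul_comm]
  exact Int.le_ceil _

theorem ceil_mul_eq_ceil_of_mem_Ioc (hlam : 0 < lam) {d x : ℝ}
    (hx : x ∈ Ioc ((⌊lam * d⌋ : ℝ) / lam) (⌈lam * d⌉ / lam)) : ⌈lam * x⌉ = ⌈lam * d⌉ := by
  refine ceil_mul_eq_of_mem_Ioc hlam (Ioc_subset_Ioc_left ?_ hx)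
  have : (⌈lam * d⌉ : ℝ) ≤ ⌊lam * d⌋ + 1 := by exact_mod_cast Int.ceil_le_floor_add_one _
  gcongr
  linarith

theorem idleTime_of_mem_Ioc (hlam : 0 < lam) {x : ℝ} (hx : x ∈ Ioc 0 lam⁻¹) :
    idleTime lam x = lam⁻¹ - x := by
  rw [idleTime, ceil_mul_eq_of_mem_Ioc (k := 1) hlam (by simpa using hx)]
  simp

theorem intervalIntegrable_exp_mul_idleTime (hlam : 0 < lam) (hmu : 0 ≤ mu) (a b : ℝ) :
    IntervalIntegrable (fun x => exp (mu * idleTime lam x)) volume a b := by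
  have hsplit : (fun x => exp (mu * idleTime lam x)) =
      fun x => exp (mu * (⌈lam * x⌉ / lam)) * exp (-(mu * x)) := by
    ext x
    rw [idleTime, ← exp_add]
    ring_nf
  have hmono : Monotone fun x : ℝ => exp (mu * (⌈lam * x⌉ / lam)) := fun x y hxy =>
    exp_le_exp.mpr (mul_le_mul_of_nonneg_left (div_le_div_of_nonneg_right
      (Int.cast_le.mpr (Int.ceil_le_ceil (mul_le_mul_of_nonneg_left hxy hlam.le))) hlam.le) hmu)
  rw [hsplit]
  exact hmono.intervalIntegrable.mul_continuousOn (by fun_prop)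

theorem integral_exp_mul_idleTime (hlam : 0 < lam) (hmu : mu ≠ 0) :
    ∫ x in 0..lam⁻¹, exp (mu * idleTime lam x) = (exp (mu / lam) - 1) / mu := by
  have hcongr : ∫ x in 0..lam⁻¹, exp (mu * idleTime lam x) =
      ∫ x in 0..lam⁻¹, exp (mu / lam) / mu * (mu * exp (-(mu * x))) := by
    refine intervalIntegral.integral_congr_ae (ae_of_all _ fun x hx => ?_)
    rw [uIoc_of_le (inv_pos.mpr hlam).le] at hx
    rw [idleTime_of_mem_Ioc hlam hx, mul_sub, sub_eq_add_neg, exp_add]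
    field_simp
  have hcancel : exp (mu / lam) * exp (-(mu * lam⁻¹)) = 1 := by
    rw [← exp_add, div_eq_mul_inv, add_neg_cancel, exp_zero]
  rw [hcongr, intervalIntegral.integral_const_mul, integral_exp_density, mul_zero, neg_zero,
    exp_zero]
  linear_combination (-1 / mu) * hcancel

theorem integral_Ioi_idleTime_add_mul_exp_density (hlam : 0 < lam) (hmu : 0 < mu) :
    ∫ x in Ioi 0, (idleTime lam x + 1 / mu) * (mu * exp (-(mu * x))) =
      lam⁻¹ / (1 - exp (-(mu * lam⁻¹))) := by
  have hint :
      IntegrableOn (fun x => (idleTime lam x + 1 / mu) * (mu * exp (-(mu * x)))) (Ioi 0) := by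
    refine (integrableOn_Ioi_exp_density hmu 0).bdd_mul (c := lam⁻¹ + 1 / mu)
      (measurable_idleTime.add_const _).aestronglyMeasurable (ae_of_all _ fun x => ?_)
    have := idleTime_nonneg hlam x
    rw [Real.norm_of_nonneg (by positivity)]
    linarith [idleTime_lt hlam x]
  have hper : Periodic (fun x => idleTime lam x + 1 / mu) lam⁻¹ := fun x =>
    congrArg (· + 1 / mu) (periodic_idleTime hlam.ne' x)
  rw [hper.integral_Ioi_mul_exp_density hmu (inv_pos.mpr hlam) hint]
  congr 1
  calc _ = ∫ x in 0..lam⁻¹, (lam⁻¹ - x + 1 / mu) * (mu * exp (-(mu * x))) := by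
        refine intervalIntegral.integral_congr_ae (ae_of_all _ fun x hx => ?_)
        rw [uIoc_of_le (inv_pos.mpr hlam).le] at hx
        rw [idleTime_of_mem_Ioc hlam hx]
    _ = lam⁻¹ := by
        rw [integral_sub_add_mul_exp_density hmu.ne']
        simp

end IdleTime

/-- `x ↦ 𝔼[g(k) | X_{k-1} = x]` times the density of `X_{k-1}`. -/
noncomputable def outerIntegrand (lam mu d x : ℝ) : ℝ :=
  meanPosPartAdd mu (⌈lam * x⌉ / lam - max d x) * (mu * exp (-(mu * x)))

section OuterIntegrand

variable {lam mu : ℝ}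

theorem integral_Ioi_inner_eq_outerIntegrand (hlam : 0 < lam) (hmu : 0 < mu) (d x' : ℝ) :
    ∫ x in Ioi 0,
        min (max (x + (⌈lam * x'⌉ : ℝ) / lam - d) 0) (x + (⌈lam * x'⌉ : ℝ) / lam - x') *
          (mu * exp (-(mu * x))) * (mu * exp (-(mu * x'))) =
      outerIntegrand lam mu d x' := by
  have hx' : 0 ≤ (⌈lam * x'⌉ : ℝ) / lam - x' := idleTime_nonneg hlam x'
  rw [integral_mul_const, outerIntegrand, ← integral_Ioi_max_add_mul_exp_density hmu]
  congr 1
  refine setIntegral_congr_fun measurableSet_Ioi fun x hx => ?_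
  have hx : 0 < x := hx
  rw [← min_sub_sub_left]
  simp only [min_def, max_def]
  split_ifs <;> linarith

theorem integrableOn_outerIntegrand (hlam : 0 < lam) (hmu : 0 < mu) (d : ℝ) :
    IntegrableOn (outerIntegrand lam mu d) (Ioi 0) := by
  refine (integrableOn_Ioi_exp_density hmu 0).bdd_mul (c := lam⁻¹ + 1 / mu)
    (by unfold meanPosPartAdd; fun_prop : Measurable _).aestronglyMeasurable
    (ae_of_all _ fun x => ?_)
  have hw : ⌈lam * x⌉ / lam - max d x ≤ idleTime lam x := by
    rw [idleTime]
    linarith [le_max_right d x]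
  rw [Real.norm_of_nonneg (meanPosPartAdd_nonneg hmu _)]
  linarith [meanPosPartAdd_le hmu (⌈lam * x⌉ / lam - max d x), idleTime_lt hlam x,
    max_le_max_right 0 hw, max_eq_left (idleTime_nonneg hlam x)]

theorem intervalIntegral_outerIntegrand_zero_floor (hlam : 0 < lam) (hmu : 0 < mu) {d : ℝ}
    (hd : 0 ≤ d) :
    ∫ x in (0 : ℝ)..⌊lam * d⌋ / lam, outerIntegrand lam mu d x =
      ⌊lam * d⌋ * (exp (-(mu * d)) * (exp (mu / lam) - 1) / mu) := by
  have hn : 0 ≤ (⌊lam * d⌋ : ℝ) / lam := div_nonneg (by positivity) hlam.le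
  have hcongr : ∫ x in (0 : ℝ)..⌊lam * d⌋ / lam, outerIntegrand lam mu d x =
      ∫ x in (0 : ℝ)..⌊lam * d⌋ / lam, exp (-(mu * d)) * exp (mu * idleTime lam x) := by
    refine intervalIntegral.integral_congr_ae (ae_of_all _ fun x hx => ?_)
    rw [uIoc_of_le hn] at hx
    have hxd : x ≤ d := hx.2.trans (floor_mul_div_le hlam d)
    have hc : (⌈lam * x⌉ : ℝ) / lam ≤ d := by
      refine le_trans ?_ (floor_mul_div_le hlam d)
      gcongr
      exact Int.ceil_le.mpr (by rw [← le_div_iff₀' hlam]; exact hx.2)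
    rw [outerIntegrand, max_eq_left hxd, meanPosPartAdd_of_nonpos (by linarith), idleTime,
      div_mul_eq_mul_div, mul_left_comm, mul_div_cancel_left₀ _ hmu.ne', ← exp_add, ← exp_add]
    ring_nf
  have hper : Periodic (fun x => exp (mu * idleTime lam x)) lam⁻¹ := fun x =>
    congrArg (fun t => exp (mu * t)) (periodic_idleTime hlam.ne' x)
  rw [hcongr, intervalIntegral.integral_const_mul,
    show (⌊lam * d⌋ : ℝ) / lam = 0 + ⌊lam * d⌋ • lam⁻¹ by
      rw [zsmul_eq_mul, div_eq_mul_inv, zero_add],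
    hper.intervalIntegral_add_zsmul_eq _ _ (intervalIntegrable_exp_mul_idleTime hlam hmu.le),
    zero_add, zsmul_eq_mul, integral_exp_mul_idleTime hlam hmu.ne']
  ring

theorem intervalIntegral_outerIntegrand_floor_self (hlam : 0 < lam) (d : ℝ) :
    ∫ x in ⌊lam * d⌋ / lam..d, outerIntegrand lam mu d x =
      (⌈lam * d⌉ / lam - d + 1 / mu) * (exp (-(mu * (⌊lam * d⌋ / lam))) - exp (-(mu * d))) := by
  rw [← integral_exp_density, ← intervalIntegral.integral_const_mul]
  refine intervalIntegral.integral_congr_ae (ae_of_all _ fun x hx => ?_)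
  rw [uIoc_of_le (floor_mul_div_le hlam d)] at hx
  have hN := le_ceil_mul_div hlam d
  rw [outerIntegrand, ceil_mul_eq_ceil_of_mem_Ioc hlam ⟨hx.1, hx.2.trans hN⟩, max_eq_left hx.2,
    meanPosPartAdd_of_nonneg (by linarith)]

theorem intervalIntegral_outerIntegrand_self_ceil (hlam : 0 < lam) (hmu : mu ≠ 0) (d : ℝ) :
    ∫ x in d..⌈lam * d⌉ / lam, outerIntegrand lam mu d x =
      (⌈lam * d⌉ / lam - d) * exp (-(mu * d)) := by
  rw [← integral_sub_add_mul_exp_density hmu]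
  refine intervalIntegral.integral_congr_ae (ae_of_all _ fun x hx => ?_)
  rw [uIoc_of_le (le_ceil_mul_div hlam d)] at hx
  rw [outerIntegrand,
    ceil_mul_eq_ceil_of_mem_Ioc hlam ⟨(floor_mul_div_le hlam d).trans_lt hx.1, hx.2⟩,
    max_eq_right hx.1.le, meanPosPartAdd_of_nonneg (by linarith [hx.2])]

theorem integral_Ioi_ceil_outerIntegrand (hlam : 0 < lam) (hmu : 0 < mu) (d : ℝ) :
    ∫ x in Ioi (⌈lam * d⌉ / lam : ℝ), outerIntegrand lam mu d x =
      exp (-(mu * (⌈lam * d⌉ / lam))) / (lam * (1 - exp (-(mu / lam)))) := by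
  have hcongr : EqOn (outerIntegrand lam mu d)
      (fun x => (idleTime lam x + 1 / mu) * (mu * exp (-(mu * x)))) (Ioi (⌈lam * d⌉ / lam)) := by
    intro x hx
    have hdx : d ≤ x := (le_ceil_mul_div hlam d).trans (le_of_lt hx)
    rw [outerIntegrand, max_eq_right hdx, ← idleTime,
      meanPosPartAdd_of_nonneg (idleTime_nonneg hlam x)]
  have hper y : idleTime lam (y + ⌈lam * d⌉ / lam) = idleTime lam y := by
    rw [div_eq_mul_inv]
    exact (periodic_idleTime hlam.ne').int_mul _ y
  rw [setIntegral_congr_fun measurableSet_Ioi hcongr, integral_Ioi_mul_exp_density_eq]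
  simp only [hper]
  rw [integral_Ioi_idleTime_add_mul_exp_density hlam hmu]
  field_simp

end OuterIntegrand

/-- Corollary 2 (D/M/1/1): with deterministic inter-arrival time `1/λ`, i.i.d. exponential
service times `x' = X_{k-1}`, `x = X_k` of rate `μ`, and idle time `⌈λx'⌉/λ - x'`, the
expectation `E[g(k)]` equals the stated closed form. -/
theorem stmt9 (lam mu d : ℝ) (hlam : 0 < lam) (hmu : 0 < mu) (hd : 1 / lam ≤ d) :
    (∫ x' in Ioi (0 : ℝ), ∫ x in Ioi (0 : ℝ),
        min (max (x + (⌈lam * x'⌉ : ℝ) / lam - d) 0) (x + (⌈lam * x'⌉ : ℝ) / lam - x') *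
          (mu * exp (-(mu * x))) * (mu * exp (-(mu * x')))) =
      exp (-(mu * ((⌈lam * d⌉ : ℝ) / lam))) / (lam * (1 - exp (-(mu / lam)))) +
        exp (-(mu * ((⌊lam * d⌋ : ℝ) / lam))) * ((⌈lam * d⌉ : ℝ) / lam - d + 1 / mu) +
        (exp (-(mu * d)) / mu) * ((exp (mu / lam) - 1) * (⌊lam * d⌋ : ℝ) - 1) := by
  have hd0 : 0 ≤ d := le_trans (by positivity) hd
  have hn : 0 ≤ (⌊lam * d⌋ : ℝ) / lam := div_nonneg (by positivity) hlam.le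
  have hint := integrableOn_outerIntegrand hlam hmu d
  have hintIoi {a : ℝ} (ha : 0 ≤ a) : IntegrableOn (outerIntegrand lam mu d) (Ioi a) :=
    hint.mono_set (Ioi_subset_Ioi ha)
  simp_rw [integral_Ioi_inner_eq_outerIntegrand hlam hmu]
  rw [← intervalIntegral.integral_interval_add_Ioi hint (hintIoi hn),
    ← intervalIntegral.integral_interval_add_Ioi (hintIoi hn) (hintIoi hd0),
    ← intervalIntegral.integral_interval_add_Ioi (hintIoi hd0)
      (hintIoi (hd0.trans (le_ceil_mul_div hlam d))),
    intervalIntegral_outerIntegrand_zero_floor hlam hmu hd0,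
    intervalIntegral_outerIntegrand_floor_self hlam d,
    intervalIntegral_outerIntegrand_self_ceil hlam hmu.ne' d,
    integral_Ioi_ceil_outerIntegrand hlam hmu d]
  ring
end

section
/- Let λ > 0 and μ > 0 with λ ≠ μ, and let d ≥ 0. Let X, X', I be mutually independent random variables where X and X' are exponentially distributed with rate μ and I is exponentially distributed with rate λ. Then E[ min{(X' + I + X − d)^+, X + I} ] = μ²(e^{−λd} − e^{−μd}) / (λ(μ − λ)²) + e^{−μd} (1/λ + 1/μ − λd/(μ − λ)). -/
/-!
On the event `X, I > 0` (almost sure) the integrand equals `(X + I - (d - X')⁺)⁺`. Integrating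
out `I`, then `X`, then `X'` reduces its mean to stop-loss transforms `s ↦ E[(Y - s)⁺]`: for
`Y ~ Exp(r)` this is `e^{-rs}/r` when `s ≥ 0` and `1/r - s` when `s < 0`; integrating it against
the density of `X` gives the stop-loss transform of the hypoexponential sum `X + I`, and one more
explicit exponential integral against the density of `X'` gives the closed form.
-/

open MeasureTheory ProbabilityTheory Real Set Filter

lemma integral_exp_neg_mul_Ioi {b : ℝ} (hb : 0 < b) (c : ℝ) :
    ∫ x in Ioi c, exp (-(b * x)) = exp (-(b * c)) / b := by
  simpa [neg_mul, neg_div, div_neg] using integral_exp_mul_Ioi (neg_neg_of_pos hb) c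

lemma integrableOn_exp_neg_mul_Ioi {b : ℝ} (hb : 0 < b) (c : ℝ) :
    IntegrableOn (fun x => exp (-(b * x))) (Ioi c) := by
  simpa [neg_mul] using exp_neg_integrableOn_Ioi c hb

lemma hasDerivAt_mul_exp_neg_mul_antideriv {b : ℝ} (hb : b ≠ 0) (x : ℝ) :
    HasDerivAt (fun y => -((y / b + 1 / b ^ 2) * exp (-(b * y)))) (x * exp (-(b * x))) x := by
  have hlin : HasDerivAt (fun y => -(b * y)) (-b) x := by
    simpa using (hasDerivAt_id x).const_mul (-b)
  refine ((((hasDerivAt_id' x).div_const b).add_const (1 / b ^ 2)).mul hlin.exp).neg.congr_deriv ?_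
  field_simp
  ring

lemma tendsto_mul_exp_neg_mul_antideriv {b : ℝ} (hb : 0 < b) :
    Tendsto (fun y => -((y / b + 1 / b ^ 2) * exp (-(b * y)))) atTop (nhds 0) := by
  have hlin := tendsto_rpow_mul_exp_neg_mul_atTop_nhds_zero 1 b hb
  have hexp : Tendsto (fun y => exp (-(b * y))) atTop (nhds 0) :=
    tendsto_exp_neg_atTop_nhds_zero.comp (tendsto_id.const_mul_atTop hb)
  simp only [rpow_one, neg_mul] at hlin
  have h := ((hlin.div_const b).add (hexp.const_mul (1 / b ^ 2))).neg
  rw [zero_div, mul_zero, add_zero, neg_zero] at h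
  exact h.congr fun y => by ring

lemma integrableOn_mul_exp_neg_mul_Ioi {b c : ℝ} (hb : 0 < b) (hc : 0 ≤ c) :
    IntegrableOn (fun x => x * exp (-(b * x))) (Ioi c) :=
  integrableOn_Ioi_deriv_of_nonneg' (fun x _ => hasDerivAt_mul_exp_neg_mul_antideriv hb.ne' x)
    (fun _ hx => mul_nonneg (hc.trans (mem_Ioi.mp hx).le) (exp_pos _).le)
    (tendsto_mul_exp_neg_mul_antideriv hb)

lemma integral_mul_exp_neg_mul_Ioi {b c : ℝ} (hb : 0 < b) (hc : 0 ≤ c) :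
    ∫ x in Ioi c, x * exp (-(b * x)) = (c / b + 1 / b ^ 2) * exp (-(b * c)) := by
  rw [integral_Ioi_of_hasDerivAt_of_tendsto'
    (fun x _ => hasDerivAt_mul_exp_neg_mul_antideriv hb.ne' x)
    (integrableOn_mul_exp_neg_mul_Ioi hb hc) (tendsto_mul_exp_neg_mul_antideriv hb)]
  ring

lemma integral_exp_mul_Ioc {k T : ℝ} (hk : k ≠ 0) (hT : 0 ≤ T) :
    ∫ x in Ioc 0 T, exp (k * x) = (exp (k * T) - 1) / k := by
  rw [← intervalIntegral.integral_of_le hT, intervalIntegral.integral_comp_mul_left _ hk,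
    integral_exp, mul_zero, exp_zero, smul_eq_mul, inv_mul_eq_div]

lemma integral_Ioi_eq_add_of_eqOn {f g h : ℝ → ℝ} {a b : ℝ} (hab : a ≤ b)
    (hfg : EqOn f g (Ioc a b)) (hfh : EqOn f h (Ioi b))
    (hg : IntegrableOn g (Ioc a b)) (hh : IntegrableOn h (Ioi b)) :
    ∫ x in Ioi a, f x = (∫ x in Ioc a b, g x) + ∫ x in Ioi b, h x := by
  rw [← Ioc_union_Ioi_eq_Ioi hab, setIntegral_union (Ioc_disjoint_Ioi le_rfl) measurableSet_Ioi
    (hg.congr_fun hfg.symm measurableSet_Ioc) (hh.congr_fun hfh.symm measurableSet_Ioi),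
    setIntegral_congr_fun measurableSet_Ioc hfg, setIntegral_congr_fun measurableSet_Ioi hfh]

lemma exp_neg_mul_mul_exp_neg_mul_sub (a b t x : ℝ) :
    exp (-(a * x)) * exp (-(b * (t - x))) = exp (-(b * t)) * exp ((b - a) * x) := by
  rw [← exp_add, ← exp_add]
  ring_nf

lemma exp_sub_mul_eq_div (a b t : ℝ) :
    exp ((b - a) * t) = exp (-(a * t)) / exp (-(b * t)) := by
  rw [eq_div_iff (exp_ne_zero _), ← exp_add]
  ring_nf

lemma min_posPart_eq_posPart_sub_posPart {x i : ℝ} (hx : 0 ≤ x) (hi : 0 ≤ i) (x' d : ℝ) :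
    min (max (x' + i + x - d) 0) (x + i) = max (x + i - max (d - x') 0) 0 := by
  rcases le_total d x' with h | h
  · rw [max_eq_right (sub_nonpos.mpr h), sub_zero, min_eq_right (le_max_of_le_left (by linarith))]
    exact (max_eq_left (by linarith)).symm
  · rw [max_eq_left (sub_nonneg.mpr h), min_eq_left (max_le (by linarith) (by linarith))]
    ring_nf

lemma abs_min_posPart_le_abs_add_abs (a x i : ℝ) : |min (max a 0) (x + i)| ≤ |x| + |i| := by
  rw [abs_le]
  constructor
  · exact le_min (by linarith [abs_nonneg x, abs_nonneg i, le_max_right a 0])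
      (by linarith [neg_abs_le x, neg_abs_le i])
  · exact (min_le_right _ _).trans (abs_add_le x i |>.trans' (le_abs_self _))

namespace ProbabilityTheory

lemma iIndepFun.map_prodMk_prodMk {Ω ι β : Type*} [MeasurableSpace Ω] [MeasurableSpace β]
    {P : Measure Ω} [IsFiniteMeasure P] {f : ι → Ω → β} (hf : iIndepFun f P)
    (hmeas : ∀ i, Measurable (f i)) {i j k : ι} (hij : i ≠ j) (hik : i ≠ k) (hjk : j ≠ k) :
    P.map (fun ω => ((f i ω, f j ω), f k ω)) =
      ((P.map (f i)).prod (P.map (f j))).prod (P.map (f k)) := by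
  rw [(indepFun_iff_map_prod_eq_prod_map_map ((hmeas i).prodMk (hmeas j)).aemeasurable
    (hmeas k).aemeasurable).mp (hf.indepFun_prodMk hmeas i j k hik hjk),
    (indepFun_iff_map_prod_eq_prod_map_map (hmeas i).aemeasurable (hmeas j).aemeasurable).mp
      (hf.indepFun hij)]

lemma expMeasure_eq_withDensity (r : ℝ) :
    expMeasure r =
      (volume.restrict (Ioi 0)).withDensity fun x => ENNReal.ofReal (r * exp (-(r * x))) := by
  rw [Measure.restrict_congr_set Ioi_ae_eq_Ici, ← withDensity_indicator measurableSet_Ici]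
  show volume.withDensity (exponentialPDF r) = _
  congr 1
  ext x
  by_cases hx : 0 ≤ x
  · rw [indicator_of_mem (mem_Ici.mpr hx), exponentialPDF_of_nonneg hx]
  · rw [indicator_of_notMem (mt mem_Ici.mp hx), exponentialPDF_of_neg (not_le.mp hx)]

lemma integral_expMeasure {r : ℝ} (hr : 0 ≤ r) (f : ℝ → ℝ) :
    ∫ x, f x ∂expMeasure r = ∫ x in Ioi 0, r * exp (-(r * x)) * f x := by
  rw [expMeasure_eq_withDensity, integral_withDensity_eq_integral_toReal_smul (by fun_prop)
    (ae_of_all _ fun _ => ENNReal.ofReal_lt_top)]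
  simp_rw [ENNReal.toReal_ofReal (by positivity : 0 ≤ r * exp (-(r * _))), smul_eq_mul]

lemma integrable_expMeasure_iff {r : ℝ} (hr : 0 ≤ r) {f : ℝ → ℝ} :
    Integrable f (expMeasure r) ↔ IntegrableOn (fun x => r * exp (-(r * x)) * f x) (Ioi 0) := by
  rw [expMeasure_eq_withDensity, integrable_withDensity_iff_integrable_smul' (by fun_prop)
    (ae_of_all _ fun _ => ENNReal.ofReal_lt_top)]
  simp_rw [ENNReal.toReal_ofReal (by positivity : 0 ≤ r * exp (-(r * _))), smul_eq_mul]
  rfl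

lemma ae_pos_expMeasure (r : ℝ) : ∀ᵐ x ∂expMeasure r, 0 < x := by
  rw [expMeasure_eq_withDensity]
  exact (withDensity_absolutelyContinuous _ _).ae_le (ae_restrict_mem measurableSet_Ioi)

lemma integrable_id_expMeasure {r : ℝ} (hr : 0 < r) : Integrable (fun x => x) (expMeasure r) := by
  rw [integrable_expMeasure_iff hr.le]
  refine IntegrableOn.congr_fun ((integrableOn_mul_exp_neg_mul_Ioi hr le_rfl).const_mul r)
    (fun x _ => by ring) measurableSet_Ioi

lemma integral_id_expMeasure {r : ℝ} (hr : 0 < r) : ∫ x, x ∂expMeasure r = 1 / r := by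
  simp_rw [integral_expMeasure hr.le, mul_assoc, mul_comm (exp _), integral_const_mul,
    integral_mul_exp_neg_mul_Ioi hr le_rfl]
  field_simp
  simp

noncomputable def expStopLoss (r s : ℝ) : ℝ :=
  if s < 0 then 1 / r - s else exp (-(r * s)) / r

lemma integral_posPart_sub_expMeasure {r : ℝ} (hr : 0 < r) (s : ℝ) :
    ∫ y, max (y - s) 0 ∂expMeasure r = expStopLoss r s := by
  have := isProbabilityMeasure_expMeasure hr
  rw [expStopLoss]
  split_ifs with hs
  · have hpos : ∀ᵐ y ∂expMeasure r, max (y - s) 0 = y - s := by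
      filter_upwards [ae_pos_expMeasure r] with y hy
      exact max_eq_left (by linarith)
    rw [integral_congr_ae hpos, integral_sub (integrable_id_expMeasure hr) (integrable_const s),
      integral_id_expMeasure hr, integral_const, probReal_univ, one_smul]
  · have hs : 0 ≤ s := not_lt.mp hs
    rw [integral_expMeasure hr.le, integral_Ioi_eq_add_of_eqOn hs (g := 0)
      (h := fun y => r * (y * exp (-(r * y))) - r * s * exp (-(r * y)))
      (fun y hy => by simp [max_eq_right (sub_nonpos.mpr hy.2)])
      (fun y hy => by simp only [max_eq_left (sub_nonneg.mpr (mem_Ioi.mp hy).le)]; ring)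
      integrableOn_zero
      (((integrableOn_mul_exp_neg_mul_Ioi hr hs).const_mul r).sub
        ((integrableOn_exp_neg_mul_Ioi hr s).const_mul _)),
      Pi.zero_def, integral_zero, zero_add,
      integral_sub ((integrableOn_mul_exp_neg_mul_Ioi hr hs).const_mul r)
        ((integrableOn_exp_neg_mul_Ioi hr s).const_mul _),
      integral_const_mul, integral_const_mul, integral_mul_exp_neg_mul_Ioi hr hs,
      integral_exp_neg_mul_Ioi hr s]
    field_simp
    ring

noncomputable def hypoexpStopLoss (lam mu t : ℝ) : ℝ :=
  mu * (exp (-(mu * t)) - exp (-(lam * t))) / (lam * (lam - mu)) +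
    exp (-(mu * t)) * (1 / lam + 1 / mu)

lemma integral_expStopLoss_sub_expMeasure {lam mu t : ℝ} (hlam : 0 < lam) (hmu : 0 < mu)
    (hne : lam ≠ mu) (ht : 0 ≤ t) :
    ∫ x, expStopLoss lam (t - x) ∂expMeasure mu = hypoexpStopLoss lam mu t := by
  have hIoi : IntegrableOn
      (fun x => mu * (x * exp (-(mu * x))) + mu * (1 / lam - t) * exp (-(mu * x))) (Ioi t) :=
    ((integrableOn_mul_exp_neg_mul_Ioi hmu ht).const_mul mu).add
      ((integrableOn_exp_neg_mul_Ioi hmu t).const_mul _)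
  rw [integral_expMeasure hmu.le, integral_Ioi_eq_add_of_eqOn ht
    (g := fun x => mu / lam * exp (-(lam * t)) * exp ((lam - mu) * x))
    (fun x hx => ?_) (fun x hx => ?_) (Continuous.integrableOn_Ioc (by fun_prop)) hIoi,
    integral_const_mul, integral_exp_mul_Ioc (sub_ne_zero.mpr hne) ht,
    integral_add ((integrableOn_mul_exp_neg_mul_Ioi hmu ht).const_mul mu)
      ((integrableOn_exp_neg_mul_Ioi hmu t).const_mul _),
    integral_const_mul, integral_const_mul, integral_mul_exp_neg_mul_Ioi hmu ht,
    integral_exp_neg_mul_Ioi hmu t, exp_sub_mul_eq_div, hypoexpStopLoss]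
  · have : lam - mu ≠ 0 := sub_ne_zero.mpr hne
    field_simp
    ring
  · simp only [expStopLoss, if_neg (not_lt.mpr (sub_nonneg.mpr hx.2))]
    linear_combination (mu / lam) * exp_neg_mul_mul_exp_neg_mul_sub mu lam t x
  · simp only [expStopLoss, if_pos (sub_neg.mpr (mem_Ioi.mp hx))]
    ring

lemma hypoexpStopLoss_zero (lam mu : ℝ) : hypoexpStopLoss lam mu 0 = 1 / lam + 1 / mu := by
  simp [hypoexpStopLoss]

lemma integral_hypoexpStopLoss_posPart_sub_expMeasure {lam mu d : ℝ} (hlam : 0 < lam)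
    (hmu : 0 < mu) (hne : lam ≠ mu) (hd : 0 ≤ d) :
    ∫ x, hypoexpStopLoss lam mu (max (d - x) 0) ∂expMeasure mu =
      mu ^ 2 * (exp (-(lam * d)) - exp (-(mu * d))) / (lam * (mu - lam) ^ 2) +
        exp (-(mu * d)) * (1 / lam + 1 / mu - lam * d / (mu - lam)) := by
  have hk : lam - mu ≠ 0 := sub_ne_zero.mpr hne
  rw [integral_expMeasure hmu.le, integral_Ioi_eq_add_of_eqOn hd
    (g := fun x => mu * (mu / (lam * (lam - mu)) + (1 / lam + 1 / mu)) * exp (-(mu * d)) -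
      mu ^ 2 / (lam * (lam - mu)) * exp (-(lam * d)) * exp ((lam - mu) * x))
    (h := fun x => mu * (1 / lam + 1 / mu) * exp (-(mu * x)))
    (fun x hx => ?_) (fun x hx => ?_) (Continuous.integrableOn_Ioc (by fun_prop))
    ((integrableOn_exp_neg_mul_Ioi hmu d).const_mul _),
    integral_sub continuous_const.integrableOn_Ioc (Continuous.integrableOn_Ioc (by fun_prop)),
    setIntegral_const, integral_const_mul, integral_exp_mul_Ioc hk hd, integral_const_mul,
    integral_exp_neg_mul_Ioi hmu d, exp_sub_mul_eq_div, measureReal_def, Real.volume_Ioc,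
    ENNReal.toReal_ofReal (by linarith), smul_eq_mul]
  · have : mu - lam ≠ 0 := fun h => hk (by linarith)
    field_simp
    ring
  · have e₁ : exp (-(mu * x)) * exp (-(mu * (d - x))) = exp (-(mu * d)) := by
      rw [← exp_add]; ring_nf
    simp only [max_eq_left (sub_nonneg.mpr hx.2), hypoexpStopLoss]
    linear_combination (mu * (mu / (lam * (lam - mu)) + (1 / lam + 1 / mu))) * e₁ -
      (mu ^ 2 / (lam * (lam - mu))) * exp_neg_mul_mul_exp_neg_mul_sub mu lam d x
  · simp only [max_eq_right (sub_nonpos.mpr (mem_Ioi.mp hx).le), hypoexpStopLoss_zero]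
    ring

lemma integrable_abs_add_abs_prod_expMeasure {r s : ℝ} (hr : 0 < r) (hs : 0 < s) :
    Integrable (fun p : ℝ × ℝ => |p.1| + |p.2|) ((expMeasure r).prod (expMeasure s)) := by
  have := isProbabilityMeasure_expMeasure hr
  have := isProbabilityMeasure_expMeasure hs
  exact ((integrable_id_expMeasure hr).abs.comp_fst _).add
    ((integrable_id_expMeasure hs).abs.comp_snd _)

lemma ae_pos_prod_expMeasure (r s : ℝ) :
    ∀ᵐ p ∂(expMeasure r).prod (expMeasure s), 0 < p.1 ∧ 0 < p.2 :=
  (Measure.quasiMeasurePreserving_fst.ae (ae_pos_expMeasure r)).and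
    (Measure.quasiMeasurePreserving_snd.ae (ae_pos_expMeasure s))

lemma integral_posPart_add_sub_prod_expMeasure {lam mu t : ℝ} (hlam : 0 < lam) (hmu : 0 < mu)
    (hne : lam ≠ mu) (ht : 0 ≤ t) :
    ∫ p : ℝ × ℝ, max (p.1 + p.2 - t) 0 ∂(expMeasure mu).prod (expMeasure lam) =
      hypoexpStopLoss lam mu t := by
  have := isProbabilityMeasure_expMeasure hlam
  have := isProbabilityMeasure_expMeasure hmu
  have hint : Integrable (fun p : ℝ × ℝ => max (p.1 + p.2 - t) 0)
      ((expMeasure mu).prod (expMeasure lam)) := by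
    refine (integrable_abs_add_abs_prod_expMeasure hmu hlam).mono'
      (Continuous.aestronglyMeasurable (by fun_prop)) (ae_of_all _ fun p => ?_)
    rw [Real.norm_eq_abs, abs_of_nonneg (le_max_right _ _)]
    exact max_le (by linarith [le_abs_self p.1, le_abs_self p.2]) (by positivity)
  have hinner : ∀ x, ∫ i, max (x + i - t) 0 ∂expMeasure lam = expStopLoss lam (t - x) := by
    intro x
    simp_rw [← integral_posPart_sub_expMeasure hlam, sub_sub_eq_add_sub, add_comm x]
  simp_rw [integral_prod _ hint, hinner]
  exact integral_expStopLoss_sub_expMeasure hlam hmu hne ht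

lemma integral_min_posPart_prod_expMeasure {lam mu : ℝ} (hlam : 0 < lam) (hmu : 0 < mu)
    (hne : lam ≠ mu) (x' d : ℝ) :
    ∫ p : ℝ × ℝ, min (max (x' + p.2 + p.1 - d) 0) (p.1 + p.2)
        ∂(expMeasure mu).prod (expMeasure lam) =
      hypoexpStopLoss lam mu (max (d - x') 0) := by
  rw [← integral_posPart_add_sub_prod_expMeasure hlam hmu hne (le_max_right _ _)]
  refine integral_congr_ae ?_
  filter_upwards [ae_pos_prod_expMeasure mu lam] with p hp
  exact min_posPart_eq_posPart_sub_posPart hp.1.le hp.2.le x' d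

end ProbabilityTheory

/-- Corollary 3 (M/M/1/1, case `λ ≠ μ`): with `X, X' ~ Exp(μ)` and `I ~ Exp(λ)` mutually
independent, `E[min ((X' + I + X - d)⁺, X + I)]` has the stated closed form. -/
theorem stmt10 {Ω : Type*} [MeasurableSpace Ω] (P : Measure Ω) [IsProbabilityMeasure P]
    (lam mu d : ℝ) (hlam : 0 < lam) (hmu : 0 < mu) (hne : lam ≠ mu) (hd : 0 ≤ d)
    (X X' I : Ω → ℝ) (hX : Measurable X) (hX' : Measurable X') (hI : Measurable I)
    (hindep : iIndepFun ![X, X', I] P)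
    (hXd : P.map X = expMeasure mu) (hX'd : P.map X' = expMeasure mu)
    (hId : P.map I = expMeasure lam) :
    (∫ ω, min (max (X' ω + I ω + X ω - d) 0) (X ω + I ω) ∂P) =
      mu ^ 2 * (exp (-(lam * d)) - exp (-(mu * d))) / (lam * (mu - lam) ^ 2) +
        exp (-(mu * d)) * (1 / lam + 1 / mu - lam * d / (mu - lam)) := by
  have := isProbabilityMeasure_expMeasure hmu
  have := isProbabilityMeasure_expMeasure hlam
  have hlaw : P.map (fun ω => ((X ω, I ω), X' ω)) =
      ((expMeasure mu).prod (expMeasure lam)).prod (expMeasure mu) := by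
    have hmeas : ∀ i, Measurable (![X, X', I] i) := by
      intro i; fin_cases i <;> assumption
    simpa [hXd, hX'd, hId] using
      hindep.map_prodMk_prodMk hmeas (i := 0) (j := 2) (k := 1) (by decide) (by decide) (by decide)
  set G : (ℝ × ℝ) × ℝ → ℝ := fun q =>
    min (max (q.2 + q.1.2 + q.1.1 - d) 0) (q.1.1 + q.1.2)
  have hG : Continuous G := by fun_prop
  have hGint : Integrable G (((expMeasure mu).prod (expMeasure lam)).prod (expMeasure mu)) := by
    refine ((integrable_abs_add_abs_prod_expMeasure hmu hlam).comp_fst _).mono'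
      hG.aestronglyMeasurable (ae_of_all _ fun _ => abs_min_posPart_le_abs_add_abs _ _ _)
  rw [← integral_map ((hX.prodMk hI).prodMk hX').aemeasurable hG.aestronglyMeasurable, hlaw,
    integral_prod_symm _ hGint]
  simp_rw [G, integral_min_posPart_prod_expMeasure hlam hmu hne]
  exact integral_hypoexpStopLoss_posPart_sub_expMeasure hlam hmu hne hd
end

section
/- Let μ > 0 and d ≥ 0, and let X and X' be independent random variables, each exponentially distributed with rate μ. Then μ · E[ min{(X' + X − d)^+, X} ] = (1 + μd) e^{−μd}. -/
/-!
For `x ≥ 0`, `min ((y + x - d)⁺, x)` is the length of `{s ∈ (0, x) : d - s < y}`. Integrating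
this over `ω` and swapping the integrals (Tonelli) gives, by independence,
`E[min ((X' + X - d)⁺, X)] = ∫_0^∞ P(X > s) P(X' > d - s) ds`. For exponential laws the
integrand is `e^{-μd}` on `(0, d]` and `e^{-μs}` on `(d, ∞)`, so the integral is
`d e^{-μd} + e^{-μd} / μ`.
-/
open MeasureTheory ProbabilityTheory Real Set

namespace ZeroWaitAoI

lemma expMeasure_Ioi_of_nonneg {r t : ℝ} (hr : 0 < r) (ht : 0 ≤ t) :
    expMeasure r (Ioi t) = ENNReal.ofReal (exp (-(r * t))) := by
  have := isProbabilityMeasure_expMeasure hr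
  have hexp : exp (-(r * t)) ≤ 1 := exp_le_one_iff.2 (by nlinarith)
  rw [← compl_Iic, prob_compl_eq_one_sub measurableSet_Iic, ← ofReal_cdf, cdf_expMeasure_eq hr,
    if_pos ht, ← ENNReal.ofReal_one, ← ENNReal.ofReal_sub _ (sub_nonneg.2 hexp), sub_sub_cancel]

lemma expMeasure_Ioi_of_nonpos {r t : ℝ} (hr : 0 < r) (ht : t ≤ 0) : expMeasure r (Ioi t) = 1 := by
  have := isProbabilityMeasure_expMeasure hr
  refine le_antisymm prob_le_one ?_
  calc 1 = expMeasure r (Ioi 0) := by simp [expMeasure_Ioi_of_nonneg hr le_rfl]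
    _ ≤ expMeasure r (Ioi t) := measure_mono (Ioi_subset_Ioi ht)

lemma ae_nonneg_expMeasure {r : ℝ} (hr : 0 < r) : ∀ᵐ x ∂expMeasure r, 0 ≤ x := by
  have := isProbabilityMeasure_expMeasure hr
  have hnull : expMeasure r (Ioi 0)ᶜ = 0 := by
    rw [prob_compl_eq_one_sub measurableSet_Ioi, expMeasure_Ioi_of_nonneg hr le_rfl]
    simp
  exact Filter.mem_of_superset (mem_ae_iff.2 hnull) fun x hx => (mem_Ioi.1 hx).le

lemma volume_restrict_Ioi_setOf_lt_and_sub_lt {x : ℝ} (hx : 0 ≤ x) (y d : ℝ) :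
    volume.restrict (Ioi 0) {s : ℝ | s < x ∧ d - s < y}
      = ENNReal.ofReal (min (max (y + x - d) 0) x) := by
  have hset : {s : ℝ | s < x ∧ d - s < y} ∩ Ioi 0 = Ioo (max (d - y) 0) x := by
    ext s
    simp only [mem_inter_iff, mem_ofPred_eq, mem_Ioi, mem_Ioo, max_lt_iff]
    exact ⟨fun ⟨⟨hsx, hys⟩, hs⟩ => ⟨⟨by linarith, hs⟩, hsx⟩,
      fun ⟨⟨hys, hs⟩, hsx⟩ => ⟨⟨hsx, by linarith⟩, hs⟩⟩
  rw [Measure.restrict_apply' measurableSet_Ioi, hset, Real.volume_Ioo]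
  rcases le_total (y + x - d) 0 with h | h
  · rw [ENNReal.ofReal_of_nonpos (by rw [sub_nonpos]; exact le_max_of_le_left (by linarith)),
      max_eq_right h, min_eq_left hx, ENNReal.ofReal_zero]
  · rw [max_eq_left h]
    congr 1
    rcases le_total (d - y) 0 with h' | h'
    · rw [max_eq_right h', min_eq_right (by linarith)]; ring
    · rw [max_eq_left h', min_eq_left (by linarith)]; ring

theorem lintegral_ofReal_min_eq_lintegral_tail_mul_tail {Ω : Type*} [MeasurableSpace Ω]
    {P : Measure Ω} [SFinite P] {X X' : Ω → ℝ} (hX : Measurable X) (hX' : Measurable X')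
    (hindep : IndepFun X X' P) (hX0 : ∀ᵐ ω ∂P, 0 ≤ X ω) (d : ℝ) :
    ∫⁻ ω, ENNReal.ofReal (min (max (X' ω + X ω - d) 0) (X ω)) ∂P
      = ∫⁻ s in Ioi 0, P.map X (Ioi s) * P.map X' (Ioi (d - s)) := by
  set E := {p : Ω × ℝ | p.2 < X p.1 ∧ d - p.2 < X' p.1}
  have hE : MeasurableSet E :=
    (measurableSet_lt measurable_snd (hX.comp measurable_fst)).inter
      (measurableSet_lt (measurable_const.sub measurable_snd) (hX'.comp measurable_fst))
  calc ∫⁻ ω, ENNReal.ofReal (min (max (X' ω + X ω - d) 0) (X ω)) ∂P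
      = ∫⁻ ω, volume.restrict (Ioi 0) (Prod.mk ω ⁻¹' E) ∂P :=
        lintegral_congr_ae (hX0.mono fun ω hω =>
          (volume_restrict_Ioi_setOf_lt_and_sub_lt hω (X' ω) d).symm)
    _ = ∫⁻ s in Ioi 0, P ((fun ω => (ω, s)) ⁻¹' E) := by
        rw [← Measure.prod_apply hE, Measure.prod_apply_symm hE]
    _ = ∫⁻ s in Ioi 0, P.map X (Ioi s) * P.map X' (Ioi (d - s)) := by
        congr with s
        rw [Measure.map_apply hX measurableSet_Ioi, Measure.map_apply hX' measurableSet_Ioi,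
          ← hindep.measure_inter_preimage_eq_mul _ _ measurableSet_Ioi measurableSet_Ioi]
        rfl

lemma lintegral_expMeasure_Ioi_mul_Ioi_sub {r d : ℝ} (hr : 0 < r) (hd : 0 ≤ d) :
    ∫⁻ s in Ioi 0, expMeasure r (Ioi s) * expMeasure r (Ioi (d - s))
      = ENNReal.ofReal ((d + 1 / r) * exp (-(r * d))) := by
  rw [← Ioc_union_Ioi_eq_Ioi hd, lintegral_union measurableSet_Ioi (Ioc_disjoint_Ioi le_rfl)]
  have hIoc : ∫⁻ s in Ioc 0 d, expMeasure r (Ioi s) * expMeasure r (Ioi (d - s))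
      = ENNReal.ofReal (d * exp (-(r * d))) := by
    rw [setLIntegral_congr_fun measurableSet_Ioc (g := fun _ => ENNReal.ofReal (exp (-(r * d))))
      fun s hs => ?_, setLIntegral_const, Real.volume_Ioc, sub_zero,
      ← ENNReal.ofReal_mul (exp_pos _).le, mul_comm]
    rw [expMeasure_Ioi_of_nonneg hr hs.1.le, expMeasure_Ioi_of_nonneg hr (sub_nonneg.2 hs.2),
      ← ENNReal.ofReal_mul (exp_pos _).le, ← exp_add]
    ring_nf
  have hIoi : ∫⁻ s in Ioi d, expMeasure r (Ioi s) * expMeasure r (Ioi (d - s))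
      = ENNReal.ofReal (exp (-(r * d)) / r) := by
    have hneg : -r < 0 := neg_neg_of_pos hr
    rw [setLIntegral_congr_fun measurableSet_Ioi (g := fun s => ENNReal.ofReal (exp (-r * s)))
      fun s hs => ?_, ← ofReal_integral_eq_lintegral_ofReal (integrableOn_exp_mul_Ioi hneg d)
      (Filter.Eventually.of_forall fun _ => (exp_pos _).le), integral_exp_mul_Ioi hneg d]
    · congr 1
      field_simp
    · rw [expMeasure_Ioi_of_nonneg hr (hd.trans hs.out.le),
        expMeasure_Ioi_of_nonpos hr (by linarith [hs.out]), mul_one, ← neg_mul]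
  rw [hIoc, hIoi, ← ENNReal.ofReal_add (by positivity) (by positivity)]
  congr 1
  ring

end ZeroWaitAoI

open ZeroWaitAoI in
/-- Corollary 5 (zero-wait policy with exponential service): with `X, X' ~ Exp(μ)` independent,
the AoI violation probability is `μ E[min ((X' + X - d)⁺, X)] = (1 + μd) e^{-μd}`. -/
theorem stmt14 {Ω : Type*} [MeasurableSpace Ω] (P : Measure Ω) [IsProbabilityMeasure P]
    (mu d : ℝ) (hmu : 0 < mu) (hd : 0 ≤ d)
    (X X' : Ω → ℝ) (hX : Measurable X) (hX' : Measurable X')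
    (hindep : IndepFun X X' P)
    (hXd : P.map X = expMeasure mu) (hX'd : P.map X' = expMeasure mu) :
    mu * ∫ ω, min (max (X' ω + X ω - d) 0) (X ω) ∂P = (1 + mu * d) * exp (-(mu * d)) := by
  have hX0 : ∀ᵐ ω ∂P, 0 ≤ X ω :=
    ae_of_ae_map hX.aemeasurable (hXd ▸ ae_nonneg_expMeasure hmu)
  have hZ0 : 0 ≤ᵐ[P] fun ω => min (max (X' ω + X ω - d) 0) (X ω) :=
    hX0.mono fun ω hω => le_min (le_max_right _ _) hω
  rw [integral_eq_lintegral_of_nonneg_ae hZ0 (by fun_prop),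
    lintegral_ofReal_min_eq_lintegral_tail_mul_tail hX hX' hindep hX0, hXd, hX'd,
    lintegral_expMeasure_Ioi_mul_Ioi_sub hmu hd, ENNReal.toReal_ofReal (by positivity)]
  field_simp
  ring
end

section
/- Let d ≥ 0 and let X', X, I, Ž be nonnegative integrable random variables on a common probability space with I ≤ Ž almost surely. Let ν and ν̂ be positive reals with ν̂ ≥ ν and 1/ν = E[X] + E[I], and set 1/λ = E[Ž] and 1/μ = E[X]. Define Φ₁ = ν̂ · E[min{(X' + Ž + X − d)^+, X + Ž}] and P = ν · E[min{(X' + I + X − d)^+, X + I}]. Then Φ₁ ≤ (ν̂/ν) · P + ν̂ · (1/λ + 1/μ − 1/ν). -/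
open MeasureTheory

/-! For fixed `c` and `b`, the map `t ↦ min ((c + t)⁺, b + t)` is a minimum of nondecreasing
1-Lipschitz functions, hence grows by at most `Z - I` when its argument moves from `I` up to `Z`.
Taking expectations, `E[min ((X' + Z + X - d)⁺, X + Z)]` exceeds
`E[min ((X' + I + X - d)⁺, X + I)]` by at most `E[Z] - E[I] = 1/λ + 1/μ - 1/ν`. -/

lemma min_max_add_le_add_sub {c b s t : ℝ} (hst : s ≤ t) :
    min (max (c + t) 0) (b + t) ≤ min (max (c + s) 0) (b + s) + (t - s) := by
  calc min (max (c + t) 0) (b + t)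
      ≤ min (max (c + s) 0 + (t - s)) (b + s + (t - s)) := by
        refine min_le_min (max_le ?_ ?_) (by linarith)
        · linarith [le_max_left (c + s) 0]
        · linarith [le_max_right (c + s) 0]
    _ = min (max (c + s) 0) (b + s) + (t - s) := min_add_add_right _ _ _

section Integral

variable {Ω : Type*} [MeasurableSpace Ω] {P : Measure Ω} [IsFiniteMeasure P]

lemma integrable_min_max_add_sub_const {X' X Y : Ω → ℝ} (d : ℝ)
    (hX' : Integrable X' P) (hX : Integrable X P) (hY : Integrable Y P) :
    Integrable (fun ω => min (max (X' ω + Y ω + X ω - d) 0) (X ω + Y ω)) P :=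
  ((((hX'.add hY).add hX).sub (integrable_const d)).sup (integrable_const 0)).inf (hX.add hY)

lemma integral_min_max_le_add_integral_sub {X' X I Z : Ω → ℝ} (d : ℝ)
    (hX' : Integrable X' P) (hX : Integrable X P) (hI : Integrable I P) (hZ : Integrable Z P)
    (hIZ : ∀ᵐ ω ∂P, I ω ≤ Z ω) :
    ∫ ω, min (max (X' ω + Z ω + X ω - d) 0) (X ω + Z ω) ∂P ≤
      (∫ ω, min (max (X' ω + I ω + X ω - d) 0) (X ω + I ω) ∂P) +
        ((∫ ω, Z ω ∂P) - ∫ ω, I ω ∂P) := by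
  have hgI := integrable_min_max_add_sub_const d hX' hX hI
  have hZI : Integrable (fun ω => Z ω - I ω) P := hZ.sub hI
  calc _ ≤ ∫ ω, (min (max (X' ω + I ω + X ω - d) 0) (X ω + I ω) + (Z ω - I ω)) ∂P := by
        refine integral_mono_ae (integrable_min_max_add_sub_const d hX' hX hZ)
          (hgI.add hZI) ?_
        filter_upwards [hIZ] with ω hω
        have hshift (u : ℝ) : X' ω + u + X ω - d = X' ω + X ω - d + u := by ring
        simp only [hshift]
        exact min_max_add_le_add_sub hω
    _ = _ := by rw [integral_add hgI hZI, integral_sub hZ hI]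

end Integral

theorem stmt16_general {Ω : Type*} [MeasurableSpace Ω] (P : Measure Ω) [IsProbabilityMeasure P]
    (d : ℝ) (X' X I Z : Ω → ℝ)
    (hX'int : Integrable X' P) (hXint : Integrable X P)
    (hIint : Integrable I P) (hZint : Integrable Z P)
    (hIZ : ∀ᵐ ω ∂P, I ω ≤ Z ω)
    (nu nuhat lam mu : ℝ) (hnu : 0 < nu) (hnuhat : 0 < nuhat)
    (hnudef : 1 / nu = (∫ ω, X ω ∂P) + ∫ ω, I ω ∂P)
    (hlamdef : 1 / lam = ∫ ω, Z ω ∂P)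
    (hmudef : 1 / mu = ∫ ω, X ω ∂P) :
    nuhat * ∫ ω, min (max (X' ω + Z ω + X ω - d) 0) (X ω + Z ω) ∂P ≤
      (nuhat / nu) * (nu * ∫ ω, min (max (X' ω + I ω + X ω - d) 0) (X ω + I ω) ∂P) +
        nuhat * (1 / lam + 1 / mu - 1 / nu) := by
  have key := integral_min_max_le_add_integral_sub d hX'int hXint hIint hZint hIZ
  rw [← mul_assoc, div_mul_cancel₀ nuhat hnu.ne', hlamdef, hmudef, hnudef]
  calc _ ≤ nuhat * _ := mul_le_mul_of_nonneg_left key hnuhat.le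
    _ = _ := by ring

/-- Theorem 8 (worst-case performance of the upper bound `Φ₁` for GI/GI/1/1): with service
times `X`, idle times `I`, inter-arrival times `Ž` (`I ≤ Ž` a.s.), `1/ν = E[X] + E[I]`,
`1/λ = E[Ž]`, `1/μ = E[X]`, and `ν̂ ≥ ν > 0`, the bound
`Φ₁ = ν̂ E[min ((X' + Ž + X - d)⁺, X + Ž)]` satisfies
`Φ₁ ≤ (ν̂/ν) · ν E[min ((X' + I + X - d)⁺, X + I)] + ν̂ (1/λ + 1/μ - 1/ν)`. -/
theorem stmt16 {Ω : Type*} [MeasurableSpace Ω] (P : Measure Ω) [IsProbabilityMeasure P]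
    (d : ℝ) (hd : 0 ≤ d) (X' X I Z : Ω → ℝ)
    (hX'nonneg : ∀ ω, 0 ≤ X' ω) (hXnonneg : ∀ ω, 0 ≤ X ω)
    (hInonneg : ∀ ω, 0 ≤ I ω) (hZnonneg : ∀ ω, 0 ≤ Z ω)
    (hX'int : Integrable X' P) (hXint : Integrable X P)
    (hIint : Integrable I P) (hZint : Integrable Z P)
    (hIZ : ∀ᵐ ω ∂P, I ω ≤ Z ω)
    (nu nuhat lam mu : ℝ) (hnu : 0 < nu) (hnuhat : 0 < nuhat) (hge : nu ≤ nuhat)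
    (hnudef : 1 / nu = (∫ ω, X ω ∂P) + ∫ ω, I ω ∂P)
    (hlamdef : 1 / lam = ∫ ω, Z ω ∂P)
    (hmudef : 1 / mu = ∫ ω, X ω ∂P) :
    nuhat * ∫ ω, min (max (X' ω + Z ω + X ω - d) 0) (X ω + Z ω) ∂P ≤
      (nuhat / nu) * (nu * ∫ ω, min (max (X' ω + I ω + X ω - d) 0) (X ω + I ω) ∂P) +
        nuhat * (1 / lam + 1 / mu - 1 / nu) :=
  stmt16_general P d X' X I Z hX'int hXint hIint hZint hIZ nu nuhat lam mu hnu hnuhat hnudef hlamdef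
    hmudef
end
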